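/- If a chain of domino tiles is blocked, then its two ends coincide, i.e., a₁ = bₙ. -/

import Mathlib

/-- A domino tile is an unordered pair of values in `{0,…,6}`. -/
abbrev Tile := Sym2 (Fin 7)

/-- The pip sum of the tile `[a,b]` is `a + b`. -/
def pips (t : Tile) : ℕ :=
  Sym2.lift ⟨fun (a b : Fin 7) => (a : ℕ) + (b : ℕ), fun a b => Nat.add_comm a b⟩ t

/-- A chain of domino tiles: a nonempty finite sequence of oriented tiles
`(a₁,b₁),…,(aₙ,bₙ)` whose underlying unordered tiles are pairwise distinct and
which satisfies `bᵢ = aᵢ₊₁` for all `1 ≤ i < n`. -/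
structure DChain where
  tiles : List (Fin 7 × Fin 7)
  ne : tiles ≠ []
  nodup : (tiles.map fun p => Sym2.mk p.1 p.2).Nodup
  linked : tiles.Chain' fun p q => p.2 = q.1

/-- The left end `a₁` of a chain. -/
def DChain.left (C : DChain) : Fin 7 := (C.tiles.head C.ne).1

/-- The right end `bₙ` of a chain. -/
def DChain.right (C : DChain) : Fin 7 := (C.tiles.getLast C.ne).2

/-- The `2n` entries `a₁,b₁,a₂,b₂,…,aₙ,bₙ` of a chain. -/
def DChain.entries (C : DChain) : List (Fin 7) := C.tiles.flatMap fun p => [p.1, p.2]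

/-- The underlying (unordered) tiles of a chain. -/
def DChain.tileList (C : DChain) : List Tile := C.tiles.map fun p => Sym2.mk p.1 p.2

/-- The total pip sum of a chain. -/
def DChain.pipsSum (C : DChain) : ℕ := (C.tiles.map fun p => (p.1 : ℕ) + (p.2 : ℕ)).sum

/-- A chain is blocked if no domino tile outside the chain contains its left end,
and no domino tile outside the chain contains its right end. -/
def DChain.Blocked (C : DChain) : Prop :=
  ∀ t : Tile, t ∉ C.tileList → C.left ∉ t ∧ C.right ∉ t

/-!
Every value `v` occurs exactly eight times on the 28 tiles (twice on the double `[v,v]`).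
If the chain is blocked, each tile containing its left end `v` lies in the chain, so `v`
occurs an even number of times among the entries `a₁,b₁,…,aₙ,bₙ`. The inner entries pair up
(`bᵢ = aᵢ₊₁`), so this number has the parity of `[a₁ = v] + [bₙ = v]`; as `a₁ = v`, also `bₙ = v`.
-/

namespace Sym2

variable {α : Type*} [DecidableEq α]

theorem count_toMultiset_mk (v a b : α) :
    s(a, b).toMultiset.count v = [a, b].count v :=
  Multiset.coe_count v [a, b]

theorem count_toMultiset_eq_zero {v : α} {t : Sym2 α} (h : v ∉ t) : t.toMultiset.count v = 0 :=
  Multiset.count_eq_zero.mpr (mt mem_toMultiset.mp h)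

theorem sum_count_toMultiset [Fintype α] (v : α) :
    ∑ t : Sym2 α, t.toMultiset.count v = Fintype.card α + 1 := by
  have hsupp : ∀ t ∈ Finset.univ, t ∉ Finset.univ.map (mkEmbedding v) →
      t.toMultiset.count v = 0 := by
    intro t _ ht
    refine count_toMultiset_eq_zero fun hv => ht ?_
    obtain ⟨w, rfl⟩ := mem_iff_exists.mp hv
    simp
  rw [← Finset.sum_subset (Finset.subset_univ _) hsupp, Finset.sum_map]
  simp [count_toMultiset_mk, List.count_cons, Finset.sum_add_distrib, add_comm]

end Sym2

namespace List

variable {α : Type*} [DecidableEq α]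

theorem sum_map_count_toMultiset_eq_sum_univ [Fintype α] {l : List (Sym2 α)} (hl : l.Nodup)
    {v : α} (hv : ∀ t, v ∈ t → t ∈ l) :
    (l.map fun t => t.toMultiset.count v).sum = ∑ t : Sym2 α, t.toMultiset.count v := by
  rw [← sum_toFinset _ hl]
  refine Finset.sum_subset (Finset.subset_univ _) fun t _ ht => ?_
  exact Sym2.count_toMultiset_eq_zero fun h => ht (mem_toFinset.mpr (hv t h))

theorem count_flatMap_pair (l : List (α × α)) (v : α) :
    (l.flatMap fun p => [p.1, p.2]).count v =
      ((l.map fun p => s(p.1, p.2)).map fun t => t.toMultiset.count v).sum := by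
  simp only [count_flatMap, map_map, Function.comp_def, Sym2.count_toMultiset_mk]

theorem even_count_pair_iff (a b v : α) : Even ([a, b].count v) ↔ (a = v ↔ b = v) := by
  by_cases ha : a = v <;> by_cases hb : b = v <;> simp [ha, hb]

theorem even_count_flatMap_iff {l : List (α × α)} (hl : l ≠ [])
    (hc : l.IsChain fun p q => p.2 = q.1) (v : α) :
    Even ((l.flatMap fun p => [p.1, p.2]).count v) ↔ ((l.head hl).1 = v ↔ (l.getLast hl).2 = v) := by
  induction l with
  | nil => exact absurd rfl hl
  | cons p l ih =>
    cases l with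
    | nil => simpa using even_count_pair_iff p.1 p.2 v
    | cons q l =>
      rw [isChain_cons_cons] at hc
      have ih := ih (cons_ne_nil _ _) hc.2
      rw [flatMap_cons, count_append, Nat.even_add, ih, even_count_pair_iff, hc.1]
      simp only [head_cons, getLast_cons_cons]
      tauto
end List

theorem blocked_ends_eq (C : DChain) (h : C.Blocked) : C.left = C.right := by
  have hcover : ∀ t, C.left ∈ t → t ∈ C.tileList := fun t ht => by_contra fun hn => (h t hn).1 ht
  have hcount : C.entries.count C.left = Fintype.card (Fin 7) + 1 := by
    rw [DChain.entries, List.count_flatMap_pair, ← Sym2.sum_count_toMultiset,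
      ← List.sum_map_count_toMultiset_eq_sum_univ C.nodup hcover]
  have heven : Even (C.entries.count C.left) := by
    rw [hcount]
    decide
  exact ((List.even_count_flatMap_iff C.ne C.linked C.left).mp heven |>.mp rfl).symm
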